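/- Let n ≥ 1, let q ∈ ℝ, and let t ∈ ℝ with t ≠ 0 and t ≠ 1. For every partition λ = (λ_1,…,λ_ℓ) with positive parts, in the field of fractions of ℝ[x_1,…,x_n] one has D¹_{q,t} p_λ = ((t^n−1)/(t−1))·p_λ + (t^n/(t−1))·Σ_{∅≠J⊆{1,…,ℓ}} (∏_{j∈J}(q^{λ_j}−1))·p_{λ_{J^c}}·( Σ_{μ⊢r_J} (1/z_μ)·(∏_{m=1}^{ℓ(μ)}(1−t^{−μ_m}))·p_μ ), where the outer sum is over nonempty subsets J of {1,…,ℓ}, r_J = Σ_{j∈J} λ_j, λ_{J^c} is the partition with parts λ_j for j ∉ J, and the inner sum is over all partitions μ of r_J. -/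

import Mathlib

/-!
Since `T_{q,x_i} p_r = p_r + (q^r - 1) x_i^r`, expanding the product gives
`D¹ p_λ = Σ_J (∏_{j∈J} (q^{λ_j} - 1)) p_{λ_{J^c}} Σ_i A_i x_i^{r_J}`, so everything reduces to
the sums `Σ_i A_i x_i^r`. They are read off from the partial fraction expansion
`F(u) = ∏_j (t - x_j u) / (1 - x_j u) = t^n + Σ_i (t - 1) A_i x_i u / (1 - x_i u)`:
the coefficients of `u^n` in the numerators give `Σ_i A_i = (t^n - 1) / (t - 1)`, and for `r ≥ 1`
the coefficient of `u^r` in `F` is `(t - 1) Σ_i A_i x_i^r`. On the other hand `F` satisfies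
`u F' = F · Σ_k (1 - t^{-k}) p_k u^k`, and so does
`Σ_r u^r Σ_{μ ⊢ r} z_μ⁻¹ ∏_m (1 - t^{-μ_m}) p_{μ_m}` (take one part out of `μ`); a solution of
this equation is determined by its constant term.
-/

open Finset MvPolynomial

/-- `z_μ = ∏_i i^{a_i(μ)} a_i(μ)!` for a multiset of parts. -/
def zWeight (m : Multiset ℕ) : ℕ :=
  ∏ i ∈ m.toFinset, i ^ m.count i * (m.count i).factorial

variable (n : ℕ)

/-- The power sum `p_r = x_1^r + ⋯ + x_n^r`. -/
noncomputable def psumP (r : ℕ) : MvPolynomial (Fin n) ℝ :=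
  ∑ i : Fin n, X i ^ r

/-- `p_μ = ∏_m p_{μ_m}` for a partition `μ` (given by its multiset of parts). -/
noncomputable def pPart {m : ℕ} (μ : Nat.Partition m) : MvPolynomial (Fin n) ℝ :=
  (μ.parts.map (psumP n)).prod

/-- The substitution `x_i ↦ q x_i` as an algebra endomorphism. -/
noncomputable def Tq (q : ℝ) (i : Fin n) :
    MvPolynomial (Fin n) ℝ →ₐ[ℝ] MvPolynomial (Fin n) ℝ :=
  aeval (fun j => if j = i then C q * X i else X j)

/-- `A_i(x;t) = ∏_{j≠i} (t x_i - x_j)/(x_i - x_j)` in the fraction field. -/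
noncomputable def AiT (t : ℝ) (i : Fin n) : FractionRing (MvPolynomial (Fin n) ℝ) :=
  ∏ j ∈ Finset.univ.erase i,
    algebraMap (MvPolynomial (Fin n) ℝ) (FractionRing (MvPolynomial (Fin n) ℝ))
        (C t * X i - X j) /
      algebraMap (MvPolynomial (Fin n) ℝ) (FractionRing (MvPolynomial (Fin n) ℝ))
        (X i - X j)

/-- The Macdonald operator `D¹_{q,t} f = Σ_i A_i(x;t) T_{q,x_i} f`, landing in the
fraction field of `ℝ[x_1,…,x_n]`. -/
noncomputable def D1 (q t : ℝ) (f : MvPolynomial (Fin n) ℝ) :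
    FractionRing (MvPolynomial (Fin n) ℝ) :=
  ∑ i : Fin n, AiT n t i *
    algebraMap (MvPolynomial (Fin n) ℝ) (FractionRing (MvPolynomial (Fin n) ℝ)) (Tq n q i f)

/-- Real scalars inside the fraction field. -/
noncomputable def cK (c : ℝ) : FractionRing (MvPolynomial (Fin n) ℝ) :=
  algebraMap (MvPolynomial (Fin n) ℝ) (FractionRing (MvPolynomial (Fin n) ℝ)) (C c)

lemma zWeight_eq_prod_of_subset {s : Multiset ℕ} {S : Finset ℕ} (h : s.toFinset ⊆ S) :
    zWeight s = ∏ i ∈ S, i ^ s.count i * (s.count i).factorial :=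
  prod_subset h fun i _ hi => by simp [Multiset.count_eq_zero_of_notMem (by simpa using hi)]

lemma zWeight_cons (k : ℕ) (s : Multiset ℕ) :
    zWeight (k ::ₘ s) = k * (s.count k + 1) * zWeight s := by
  classical
  have hS : k ∈ insert k s.toFinset := mem_insert_self _ _
  rw [zWeight_eq_prod_of_subset (S := insert k s.toFinset) (by simp),
    zWeight_eq_prod_of_subset (subset_insert _ _), ← mul_prod_erase _ _ hS,
    ← mul_prod_erase _ (fun i => i ^ s.count i * (s.count i).factorial) hS,
    prod_congr rfl fun i hi => by rw [Multiset.count_cons_of_ne (ne_of_mem_erase hi)],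
    Multiset.count_cons_self, Nat.factorial_succ, pow_succ]
  ring

section zSum

variable {K : Type*} [Field K] (w : ℕ → K)

noncomputable def zTerm (s : Multiset ℕ) : K :=
  (zWeight s : K)⁻¹ * (s.map w).prod

-- the coefficient of `u ^ r` in `exp (∑ k, w k * u ^ k / k)`
noncomputable def zSum (r : ℕ) : K :=
  ∑ μ : Nat.Partition r, zTerm w μ.parts

lemma zSum_zero : zSum w 0 = 1 := by
  simp [zSum, zTerm, zWeight]

variable [CharZero K]

lemma natCast_mul_zTerm_cons {k : ℕ} (hk : k ≠ 0) (s : Multiset ℕ) :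
    ((k ::ₘ s).count k * k : K) * zTerm w (k ::ₘ s) = w k * zTerm w s := by
  have : ((s.count k + 1) * k : K) ≠ 0 :=
    mul_ne_zero (Nat.cast_add_one_ne_zero _) (Nat.cast_ne_zero.2 hk)
  rw [zTerm, zTerm, zWeight_cons, Multiset.count_cons_self, Multiset.map_cons, Multiset.prod_cons]
  push_cast
  field_simp

lemma sum_count_mul_zTerm {r k : ℕ} (hk : 1 ≤ k) (hkr : k ≤ r) :
    ∑ μ : Nat.Partition r, (μ.parts.count k * k : K) * zTerm w μ.parts =
      w k * zSum w (r - k) := by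
  classical
  rw [← sum_filter_of_ne (p := fun μ => k ∈ μ.parts) fun μ _ h => by
      by_contra hkμ; simp [Multiset.count_eq_zero_of_notMem hkμ] at h,
    sum_subtype (p := fun μ => k ∈ μ.parts) _ (fun _ => by simp), zSum, mul_sum]
  refine Fintype.sum_equiv (Nat.Partition.partitionWithPartEquiv hk hkr) _ _ fun μ => ?_
  have hμ : μ.1.parts = k ::ₘ (Nat.Partition.partitionWithPartEquiv hk hkr μ).parts := by
    simp [Multiset.cons_erase μ.2]
  rw [hμ, natCast_mul_zTerm_cons w (by omega)]

lemma Nat.Partition.sum_range_count_mul {r : ℕ} (μ : Nat.Partition r) :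
    ∑ k ∈ range (r + 1), μ.parts.count k * k = r := by
  classical
  rw [← sum_subset (s₁ := μ.parts.toFinset) (fun k hk => ?_) fun k _ hk => ?_]
  · simpa [mul_comm, μ.parts_sum] using (sum_multiset_count μ.parts).symm
  · simpa [Nat.lt_succ_iff] using Nat.Partition.le_of_mem_parts (Multiset.mem_toFinset.1 hk)
  · simp [Multiset.count_eq_zero_of_notMem (by simpa using hk)]

lemma natCast_mul_zSum (hw : w 0 = 0) (r : ℕ) :
    (r : K) * zSum w r = ∑ p ∈ antidiagonal r, zSum w p.1 * w p.2 := by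
  calc (r : K) * zSum w r
      = ∑ k ∈ range (r + 1), ∑ μ : Nat.Partition r,
          (μ.parts.count k * k : K) * zTerm w μ.parts := by
        rw [zSum, mul_sum, sum_comm]
        refine sum_congr rfl fun μ _ => ?_
        rw [← sum_mul]
        exact_mod_cast
          congrArg (fun m : ℕ => (m : K) * zTerm w μ.parts) μ.sum_range_count_mul.symm
    _ = ∑ k ∈ range (r + 1), w k * zSum w (r - k) := by
        refine sum_congr rfl fun k hk => ?_
        rcases Nat.eq_zero_or_pos k with rfl | hk0
        · simp [hw]
        · exact sum_count_mul_zTerm w hk0 (by simpa [Nat.lt_succ_iff] using hk)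
    _ = _ := by
        rw [← Nat.sum_antidiagonal_swap]
        simp only [Prod.fst_swap, Prod.snd_swap, mul_comm (zSum w _)]
        exact (Nat.sum_antidiagonal_eq_sum_range_succ (fun k i => w k * zSum w i) r).symm

end zSum

section EulerLogDeriv

open PowerSeries

variable {R : Type*} [CommRing R]

def HasEulerLogDeriv (f a : R⟦X⟧) : Prop :=
  PowerSeries.X * d⁄dX R f = f * a

lemma HasEulerLogDeriv.mul {f g a b : R⟦X⟧} (hf : HasEulerLogDeriv f a)
    (hg : HasEulerLogDeriv g b) : HasEulerLogDeriv (f * g) (a + b) := by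
  unfold HasEulerLogDeriv at *
  rw [Derivation.leibniz, smul_eq_mul, smul_eq_mul]
  linear_combination f * hg + g * hf

lemma HasEulerLogDeriv.prod {ι : Type*} (s : Finset ι) {f a : ι → R⟦X⟧}
    (h : ∀ i ∈ s, HasEulerLogDeriv (f i) (a i)) :
    HasEulerLogDeriv (∏ i ∈ s, f i) (∑ i ∈ s, a i) := by
  classical
  induction s using Finset.induction_on with
  | empty => simp [HasEulerLogDeriv]
  | insert i s hi ih =>
    rw [prod_insert hi, sum_insert hi]
    exact (h i (mem_insert_self i s)).mul (ih fun j hj => h j (mem_insert_of_mem hj))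

lemma hasEulerLogDeriv_C (c : R) : HasEulerLogDeriv (PowerSeries.C c) 0 := by
  simp [HasEulerLogDeriv]

noncomputable def geom (c : R) : R⟦X⟧ :=
  mk (c ^ ·)

lemma geom_mul_one_sub (c : R) : geom c * (1 - PowerSeries.C c * PowerSeries.X) = 1 := by
  simpa [geom, rescale_mk, rescale_X] using
    congrArg (rescale c) (mk_one_mul_one_sub_eq_one (S := R))

lemma coeff_geom (c : R) (k : ℕ) : coeff k (geom c) = c ^ k :=
  coeff_mk _ _

lemma C_mul_X_mul_geom (c : R) : PowerSeries.C c * PowerSeries.X * geom c = geom c - 1 := by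
  linear_combination -geom_mul_one_sub c

lemma derivative_one_sub_C_mul_X (c : R) :
    d⁄dX R (1 - PowerSeries.C c * PowerSeries.X) = -PowerSeries.C c := by
  simp

lemma hasEulerLogDeriv_geom (c : R) : HasEulerLogDeriv (geom c) (geom c - 1) := by
  have h := geom_mul_one_sub c
  have hd := congrArg (d⁄dX R) h
  rw [Derivation.leibniz, smul_eq_mul, smul_eq_mul, derivative_one_sub_C_mul_X,
    derivative_one] at hd
  unfold HasEulerLogDeriv
  linear_combination
    (PowerSeries.X * geom c) * hd - (PowerSeries.X * d⁄dX R (geom c) + geom c) * h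

lemma hasEulerLogDeriv_one_sub_C_mul_X (c : R) :
    HasEulerLogDeriv (1 - PowerSeries.C c * PowerSeries.X) (1 - geom c) := by
  unfold HasEulerLogDeriv
  rw [derivative_one_sub_C_mul_X]
  linear_combination geom_mul_one_sub c

end EulerLogDeriv

section EulerLogDerivField

open PowerSeries

variable {K : Type*} [Field K] [CharZero K]

lemma HasEulerLogDeriv.eq_C_mul {F G a : K⟦X⟧} (hG0 : constantCoeff G ≠ 0)
    (hF : HasEulerLogDeriv F a) (hG : HasEulerLogDeriv G a) :
    F = PowerSeries.C (constantCoeff F / constantCoeff G) * G := by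
  have hGinv : G * G⁻¹ = 1 := PowerSeries.mul_inv_cancel G hG0
  have hd : d⁄dX K (F * G⁻¹) = 0 := by
    refine mul_left_cancel₀ (X_ne_zero (R := K)) ?_
    rw [mul_zero, Derivation.leibniz, smul_eq_mul, smul_eq_mul, derivative_inv']
    unfold HasEulerLogDeriv at hF hG
    linear_combination (-F * G⁻¹ ^ 2) * hG + G⁻¹ * hF - F * a * G⁻¹ * hGinv
  have hconst : F * G⁻¹ = PowerSeries.C (constantCoeff F / constantCoeff G) :=
    derivative.ext (by rw [hd, derivative_C]) (by simp [div_eq_mul_inv])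
  rw [← hconst, mul_assoc, PowerSeries.inv_mul_cancel _ hG0, mul_one]

lemma coeff_X_mul_derivative (f : K⟦X⟧) (r : ℕ) :
    coeff r (PowerSeries.X * d⁄dX K f) = r * coeff r f := by
  cases r with
  | zero => simp
  | succ s => rw [coeff_succ_X_mul, coeff_derivative, mul_comm]; push_cast; ring

lemma hasEulerLogDeriv_mk_zSum {w : ℕ → K} (hw : w 0 = 0) :
    HasEulerLogDeriv (mk (zSum w)) (mk w) := by
  ext r
  rw [coeff_X_mul_derivative, coeff_mk, natCast_mul_zSum w hw, PowerSeries.coeff_mul]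
  simp only [coeff_mk]

end EulerLogDerivField

section PolynomialProducts

variable {K : Type*} [Field K] {ι : Type*}

lemma Polynomial.natDegree_prod_le_card (s : Finset ι) {f : ι → Polynomial K}
    (h : ∀ j ∈ s, (f j).natDegree ≤ 1) : (∏ j ∈ s, f j).natDegree ≤ #s :=
  (Polynomial.natDegree_prod_le (s := s) (f := f)).trans (by simpa using sum_le_sum h)

lemma Polynomial.natDegree_C_sub_C_mul_X_le (a b : K) :
    (Polynomial.C a - Polynomial.C b * Polynomial.X).natDegree ≤ 1 := by
  compute_degree!

lemma Polynomial.coeff_prod_C_sub_C_mul_X (s : Finset ι) (a b : ι → K) :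
    (∏ j ∈ s, (Polynomial.C (a j) - Polynomial.C (b j) * Polynomial.X)).coeff #s =
      ∏ j ∈ s, -b j := by
  rw [← mul_one #s, Polynomial.coeff_prod_of_natDegree_le _ _ 1 fun j _ =>
    Polynomial.natDegree_C_sub_C_mul_X_le (a j) (b j)]
  simp

end PolynomialProducts

section MacdonaldCoefficient

variable {K : Type*} [Field K] {ι : Type*} [Fintype ι] [DecidableEq ι]

def macdonaldA (t : K) (x : ι → K) (i : ι) : K :=
  ∏ j ∈ univ.erase i, (t * x i - x j) / (x i - x j)

variable {t : K} {x : ι → K}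

lemma prod_sub_mul_inv_eq (hx : Function.Injective x) {i : ι} (hx0 : x i ≠ 0) :
    ∏ j, (t - x j * (x i)⁻¹) =
      (t - 1) * macdonaldA t x i * ∏ j ∈ univ.erase i, (1 - x j * (x i)⁻¹) := by
  rw [← mul_prod_erase univ _ (mem_univ i), mul_inv_cancel₀ hx0, macdonaldA, mul_assoc,
    ← prod_mul_distrib]
  congr 1
  refine prod_congr rfl fun j hj => ?_
  have : x i - x j ≠ 0 := sub_ne_zero.2 (hx.ne (ne_of_mem_erase hj).symm)
  field_simp

-- Both sides have degree at most `card ι` and agree at `0` and at every `(x i)⁻¹`.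
theorem prod_C_sub_C_mul_X_eq (hx : Function.Injective x) (hx0 : ∀ i, x i ≠ 0) :
    ∏ j, (Polynomial.C t - Polynomial.C (x j) * Polynomial.X) =
      Polynomial.C (t ^ Fintype.card ι) * ∏ j, (1 - Polynomial.C (x j) * Polynomial.X) +
        ∑ i, Polynomial.C ((t - 1) * macdonaldA t x i * x i) * Polynomial.X *
          ∏ j ∈ univ.erase i, (1 - Polynomial.C (x j) * Polynomial.X) := by
  classical
  set s : Finset K := insert 0 (univ.image fun i => (x i)⁻¹)
  have hcard : #s = Fintype.card ι + 1 := by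
    rw [card_insert_of_notMem (by simpa using fun i => (hx0 i)),
      card_image_of_injective _ fun a b h => hx (inv_injective h), card_univ]
  have hdeg : ∀ p : Polynomial K, p.natDegree ≤ Fintype.card ι → p.degree < #s := fun p hp =>
    (Polynomial.degree_le_of_natDegree_le hp).trans_lt
      (by rw [hcard]; exact_mod_cast Nat.lt_succ_self _)
  refine Polynomial.eq_of_degrees_lt_of_eval_finset_eq s (hdeg _ ?_) (hdeg _ ?_) fun y hy => ?_
  · simpa using Polynomial.natDegree_prod_le_card univ fun j _ =>
      Polynomial.natDegree_C_sub_C_mul_X_le t (x j)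
  · have hP (s' : Finset ι) :
        (∏ j ∈ s', (1 - Polynomial.C (x j) * Polynomial.X)).natDegree ≤ #s' :=
      Polynomial.natDegree_prod_le_card s' fun j _ => by
        simpa using Polynomial.natDegree_C_sub_C_mul_X_le 1 (x j)
    refine (Polynomial.natDegree_add_le _ _).trans <| max_le
      ((Polynomial.natDegree_C_mul_le _ _).trans (by simpa using hP univ))
      (Polynomial.natDegree_sum_le_of_forall_le _ _ fun i _ => ?_)
    refine Polynomial.natDegree_mul_le.trans ?_
    have hCX :
        (Polynomial.C ((t - 1) * macdonaldA t x i * x i) * Polynomial.X).natDegree ≤ 1 := by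
      compute_degree
    have hi := hP (univ.erase i)
    rw [card_erase_of_mem (mem_univ i), card_univ] at hi
    have := Fintype.card_pos_iff.2 ⟨i⟩
    omega
  · rcases mem_insert.1 hy with rfl | hy
    · simp [Polynomial.eval_prod, Polynomial.eval_finsetSum]
    obtain ⟨i, -, rfl⟩ := mem_image.1 hy
    have hvanish {s' : Finset ι} (hs' : i ∈ s') :
        ∏ j ∈ s', (1 - x j * (x i)⁻¹) = 0 :=
      prod_eq_zero hs' (by rw [mul_inv_cancel₀ (hx0 i), sub_self])
    simp only [Polynomial.eval_prod, Polynomial.eval_add, Polynomial.eval_mul,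
      Polynomial.eval_finsetSum, Polynomial.eval_sub, Polynomial.eval_C, Polynomial.eval_X,
      Polynomial.eval_one]
    rw [hvanish (mem_univ i), mul_zero, zero_add, prod_sub_mul_inv_eq hx (hx0 i),
      sum_eq_single i
        (fun b _ hb => by rw [hvanish (mem_erase.2 ⟨hb.symm, mem_univ i⟩), mul_zero]) (by simp)]
    field_simp [hx0 i]

theorem sum_macdonaldA (hx : Function.Injective x) (hx0 : ∀ i, x i ≠ 0) (ht1 : t ≠ 1) :
    ∑ i, macdonaldA t x i = (t ^ Fintype.card ι - 1) / (t - 1) := by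
  rcases isEmpty_or_nonempty ι with hι | hι
  · simp
  obtain ⟨m, hm⟩ := Nat.exists_eq_add_one_of_ne_zero (Fintype.card_ne_zero (α := ι))
  have htop (a : K) :
      (∏ j, (Polynomial.C a - Polynomial.C (x j) * Polynomial.X)).coeff (m + 1) =
        ∏ j, -x j := by
    rw [← hm, ← card_univ]
    exact Polynomial.coeff_prod_C_sub_C_mul_X _ (fun _ => a) x
  have htop' : (∏ j, (1 - Polynomial.C (x j) * Polynomial.X)).coeff (m + 1) = ∏ j, -x j := by
    simpa using htop 1
  have hlow (i : ι) :
      x i * (∏ j ∈ univ.erase i, (1 - Polynomial.C (x j) * Polynomial.X)).coeff m =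
        -∏ j, -x j := by
    have hi : #(univ.erase i) = m := by simp [hm]
    have hc :
        (∏ j ∈ univ.erase i, (1 - Polynomial.C (x j) * Polynomial.X)).coeff #(univ.erase i) =
          ∏ j ∈ univ.erase i, -x j := by
      simpa using Polynomial.coeff_prod_C_sub_C_mul_X (univ.erase i) (fun _ => 1) x
    rw [← hi, hc, ← mul_prod_erase _ (fun j => -x j) (mem_univ i)]
    ring
  have h := congrArg (Polynomial.coeff · (m + 1)) (prod_C_sub_C_mul_X_eq (t := t) hx hx0)
  simp only [Polynomial.coeff_add, Polynomial.coeff_C_mul, Polynomial.finsetSum_coeff, mul_assoc,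
    Polynomial.coeff_X_mul, htop, htop', hlow, mul_neg, sum_neg_distrib, ← sum_mul,
    ← mul_sum] at h
  have hQ : ∏ j, -x j ≠ 0 := prod_ne_zero_iff.2 fun j _ => neg_ne_zero.2 (hx0 j)
  rw [eq_div_iff (sub_ne_zero.2 ht1)]
  refine mul_left_cancel₀ hQ ?_
  linear_combination h

lemma prod_C_sub_C_mul_X_mul_geom_eq (hx : Function.Injective x) (hx0 : ∀ i, x i ≠ 0) :
    ∏ j, (PowerSeries.C t - PowerSeries.C (x j) * PowerSeries.X) * geom (x j) =
      PowerSeries.C (t ^ Fintype.card ι) +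
        ∑ i, PowerSeries.C ((t - 1) * macdonaldA t x i) * (geom (x i) - 1) := by
  have h := congrArg (Polynomial.coeToPowerSeries.ringHom (R := K))
    (prod_C_sub_C_mul_X_eq (t := t) hx hx0)
  simp only [map_prod, map_add, map_sum, map_mul, map_sub, map_one, Polynomial.coe_C,
    Polynomial.coe_X, Polynomial.coeToPowerSeries.ringHom_apply] at h
  have hinv (s : Finset ι) :
      ∏ j ∈ s, (1 - PowerSeries.C (x j) * PowerSeries.X) * geom (x j) = 1 :=
    prod_eq_one fun j _ => by rw [mul_comm, geom_mul_one_sub]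
  rw [prod_mul_distrib, h, add_mul, mul_assoc, ← prod_mul_distrib, hinv, mul_one, sum_mul]
  refine congrArg _ (sum_congr rfl fun i _ => ?_)
  have hi := hinv (univ.erase i)
  rw [prod_mul_distrib] at hi
  rw [← mul_prod_erase _ (fun j => geom (x j)) (mem_univ i), ← C_mul_X_mul_geom, map_mul,
    map_sub, map_one]
  linear_combination ((PowerSeries.C t - 1) * PowerSeries.C (macdonaldA t x i) *
    PowerSeries.C (x i) * PowerSeries.X * geom (x i)) * hi

lemma hasEulerLogDeriv_C_sub_C_mul_X_mul_geom (ht0 : t ≠ 0) (c : K) :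
    HasEulerLogDeriv ((PowerSeries.C t - PowerSeries.C c * PowerSeries.X) * geom c)
      (geom c - geom (t⁻¹ * c)) := by
  have hfactor : PowerSeries.C t - PowerSeries.C c * PowerSeries.X =
      PowerSeries.C t * (1 - PowerSeries.C (t⁻¹ * c) * PowerSeries.X) := by
    rw [mul_sub, mul_one, ← mul_assoc, ← map_mul, mul_inv_cancel_left₀ ht0]
  rw [hfactor]
  convert ((hasEulerLogDeriv_C t).mul (hasEulerLogDeriv_one_sub_C_mul_X _)).mul
    (hasEulerLogDeriv_geom c) using 1
  ring

theorem sum_macdonaldA_mul_pow [CharZero K] (hx : Function.Injective x) (hx0 : ∀ i, x i ≠ 0)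
    (ht0 : t ≠ 0) (ht1 : t ≠ 1) {r : ℕ} (hr : r ≠ 0) :
    ∑ i, macdonaldA t x i * x i ^ r =
      t ^ Fintype.card ι / (t - 1) * zSum (fun k => (1 - t⁻¹ ^ k) * ∑ j, x j ^ k) r := by
  set w : ℕ → K := fun k => (1 - t⁻¹ ^ k) * ∑ j, x j ^ k
  set F := ∏ j, (PowerSeries.C t - PowerSeries.C (x j) * PowerSeries.X) * geom (x j)
  have hw : PowerSeries.mk w = ∑ j, (geom (x j) - geom (t⁻¹ * x j)) := by
    ext k
    simp [w, coeff_geom, mul_pow, mul_sum, sub_mul]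
  have hF : HasEulerLogDeriv F (PowerSeries.mk w) :=
    hw ▸ HasEulerLogDeriv.prod univ fun j _ => hasEulerLogDeriv_C_sub_C_mul_X_mul_geom ht0 (x j)
  have hFG := hF.eq_C_mul (by simp [zSum_zero]) (hasEulerLogDeriv_mk_zSum (by simp [w]))
  have hF0 : PowerSeries.constantCoeff F = t ^ Fintype.card ι := by simp [F, geom]
  have hcoeff := congrArg (PowerSeries.coeff r) hFG
  rw [hF0, show F = _ from prod_C_sub_C_mul_X_mul_geom_eq hx hx0] at hcoeff
  simp only [map_add, map_sum, PowerSeries.coeff_C_mul, PowerSeries.coeff_C, if_neg hr, map_sub,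
    coeff_geom, PowerSeries.coeff_one, sub_zero, zero_add, PowerSeries.constantCoeff_mk,
    PowerSeries.coeff_mk, zSum_zero, div_one] at hcoeff
  rw [div_mul_eq_mul_div, eq_div_iff (sub_ne_zero.2 ht1), ← hcoeff, sum_mul]
  exact sum_congr rfl fun i _ => by ring

end MacdonaldCoefficient

section MacdonaldOperator

lemma algebraMap_C_eq (c : ℝ) :
    algebraMap (MvPolynomial (Fin n) ℝ) (FractionRing (MvPolynomial (Fin n) ℝ)) (C c) =
      algebraMap ℝ (FractionRing (MvPolynomial (Fin n) ℝ)) c := by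
  rw [IsScalarTower.algebraMap_apply ℝ (MvPolynomial (Fin n) ℝ), algebraMap_eq]

lemma cK_eq (c : ℝ) : cK n c = algebraMap ℝ (FractionRing (MvPolynomial (Fin n) ℝ)) c :=
  algebraMap_C_eq n c

lemma injective_algebraMap_X :
    Function.Injective fun i : Fin n =>
      algebraMap (MvPolynomial (Fin n) ℝ) (FractionRing (MvPolynomial (Fin n) ℝ)) (X i) :=
  fun _ _ h => X_injective (IsFractionRing.injective _ _ h)

lemma algebraMap_X_ne_zero (i : Fin n) :
    algebraMap (MvPolynomial (Fin n) ℝ) (FractionRing (MvPolynomial (Fin n) ℝ)) (X i) ≠ 0 :=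
  (map_ne_zero_iff _ (IsFractionRing.injective _ _)).2 (X_ne_zero i)

lemma AiT_eq_macdonaldA (t : ℝ) (i : Fin n) :
    AiT n t i = macdonaldA (algebraMap ℝ (FractionRing (MvPolynomial (Fin n) ℝ)) t)
      (fun j => algebraMap (MvPolynomial (Fin n) ℝ) (FractionRing (MvPolynomial (Fin n) ℝ)) (X j))
      i := by
  simp only [AiT, macdonaldA, map_sub, map_mul, algebraMap_C_eq]

lemma Tq_psumP (q : ℝ) (i : Fin n) (r : ℕ) :
    Tq n q i (psumP n r) = psumP n r + C (q ^ r - 1) * X i ^ r := by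
  simp only [Tq, psumP, map_sum, map_pow, aeval_X]
  rw [← add_sum_erase _ _ (mem_univ i), ← add_sum_erase _ (fun j => X j ^ r) (mem_univ i),
    sum_congr rfl fun j hj => by rw [if_neg (ne_of_mem_erase hj)], if_pos rfl, mul_pow, ← map_pow,
    map_sub, map_one]
  ring

lemma Tq_prod_psumP (q : ℝ) (i : Fin n) {ℓ : ℕ} (lam : Fin ℓ → ℕ) :
    Tq n q i (∏ j, psumP n (lam j)) =
      ∑ J ∈ univ.powerset, C (∏ j ∈ J, (q ^ lam j - 1)) * X i ^ (∑ j ∈ J, lam j) *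
        ∏ j ∈ Jᶜ, psumP n (lam j) := by
  simp only [map_prod, Tq_psumP, add_comm (psumP n _), prod_add, compl_eq_univ_sdiff,
    prod_mul_distrib, prod_pow_eq_pow_sum]

lemma D1_prod_psumP (q t : ℝ) {ℓ : ℕ} (lam : Fin ℓ → ℕ) :
    D1 n q t (∏ j, psumP n (lam j)) =
      ∑ J ∈ univ.powerset, cK n (∏ j ∈ J, (q ^ lam j - 1)) *
        algebraMap (MvPolynomial (Fin n) ℝ) (FractionRing (MvPolynomial (Fin n) ℝ))
          (∏ j ∈ Jᶜ, psumP n (lam j)) *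
        ∑ i, AiT n t i * algebraMap (MvPolynomial (Fin n) ℝ)
          (FractionRing (MvPolynomial (Fin n) ℝ)) (X i) ^ (∑ j ∈ J, lam j) := by
  simp only [D1, Tq_prod_psumP, map_sum, mul_sum, map_mul, map_pow, cK]
  rw [sum_comm]
  exact sum_congr rfl fun J _ => sum_congr rfl fun i _ => by ring

lemma sum_AiT {t : ℝ} (ht1 : t ≠ 1) : ∑ i, AiT n t i = cK n ((t ^ n - 1) / (t - 1)) := by
  simp only [AiT_eq_macdonaldA, cK_eq]
  rw [sum_macdonaldA (injective_algebraMap_X n) (algebraMap_X_ne_zero n)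
    ((map_ne_one_iff _ (algebraMap ℝ _).injective).2 ht1), Fintype.card_fin]
  simp

lemma sum_AiT_mul_pow {t : ℝ} (ht0 : t ≠ 0) (ht1 : t ≠ 1) {r : ℕ} (hr : r ≠ 0) :
    ∑ i, AiT n t i * algebraMap (MvPolynomial (Fin n) ℝ)
        (FractionRing (MvPolynomial (Fin n) ℝ)) (X i) ^ r =
      cK n (t ^ n / (t - 1)) *
        ∑ μ : Nat.Partition r, cK n ((zWeight μ.parts : ℝ)⁻¹ *
            (μ.parts.map fun p => 1 - t⁻¹ ^ p).prod) *
          algebraMap (MvPolynomial (Fin n) ℝ) (FractionRing (MvPolynomial (Fin n) ℝ))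
            (pPart n μ) := by
  simp only [AiT_eq_macdonaldA]
  rw [sum_macdonaldA_mul_pow (injective_algebraMap_X n) (algebraMap_X_ne_zero n)
    ((map_ne_zero _).2 ht0) ((map_ne_one_iff _ (algebraMap ℝ _).injective).2 ht1) hr,
    Fintype.card_fin, zSum]
  simp [cK_eq, zTerm, pPart, psumP, map_multiset_prod, Multiset.prod_map_mul, Function.comp_def,
    mul_assoc]

end MacdonaldOperator

theorem D1_powerSum (q t : ℝ) (ht0 : t ≠ 0) (ht1 : t ≠ 1)
    (ℓ : ℕ) (lam : Fin ℓ → ℕ) (hpos : ∀ j, 0 < lam j) :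
    D1 n q t (∏ j : Fin ℓ, psumP n (lam j)) =
      cK n ((t ^ n - 1) / (t - 1)) *
        algebraMap (MvPolynomial (Fin n) ℝ) (FractionRing (MvPolynomial (Fin n) ℝ))
          (∏ j : Fin ℓ, psumP n (lam j)) +
      cK n (t ^ n / (t - 1)) *
        ∑ J ∈ Finset.univ.powerset.filter (fun J : Finset (Fin ℓ) => J ≠ ∅),
          cK n (∏ j ∈ J, (q ^ lam j - 1)) *
            algebraMap (MvPolynomial (Fin n) ℝ) (FractionRing (MvPolynomial (Fin n) ℝ))
              (∏ j ∈ Jᶜ, psumP n (lam j)) *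
            ∑ μ : Nat.Partition (∑ j ∈ J, lam j),
              cK n (((zWeight μ.parts : ℝ))⁻¹ *
                  (μ.parts.map (fun p => 1 - t⁻¹ ^ p)).prod) *
                algebraMap (MvPolynomial (Fin n) ℝ) (FractionRing (MvPolynomial (Fin n) ℝ))
                  (pPart n μ) := by
  rw [D1_prod_psumP, filter_ne', ← add_sum_erase _ _ (empty_mem_powerset _),
    mul_sum _ _ (cK n (t ^ n / (t - 1)))]
  refine congrArg₂ (· + ·) ?_ ?_
  · simp only [prod_empty, sum_empty, pow_zero, mul_one, compl_empty, sum_AiT n ht1]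
    rw [show cK n 1 = 1 by simp [cK], one_mul, mul_comm]
  · refine sum_congr rfl fun J hJ => ?_
    obtain ⟨j, hj⟩ := nonempty_iff_ne_empty.2 (ne_of_mem_erase hJ)
    have hr : ∑ j ∈ J, lam j ≠ 0 := (sum_pos (fun j _ => hpos j) ⟨j, hj⟩).ne'
    rw [sum_AiT_mul_pow n ht0 ht1 hr]
    ring
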